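/- arXiv:2603.07005 — 2 statements merged into one kernel-verified Lean document; each statement's English description precedes it below -/
import Mathlib

section
/- Let a_1, …, a_m be positive integers, t a positive integer with t ≤ V, where V = ∑_{i=1}^m a_i, and let r(x) = min(V·t, x). For S ⊆ {1,…,m}, define F(S) = min(V·t, V·∑_{i∈S} a_i) + ∑_{i∉S} a_i. Then there exists S ⊆ {1,…,m} with ∑_{i∈S} a_i = t if and only if the maximum of F(S) over all S ⊆ {1,…,m} equals V·t + V − t. -/
/-- Knapsack reduction equivalence. With `V = ∑ a i`,
`F S = min (V*t) (V * ∑_{i∈S} a i) + ∑_{i∈Sᶜ} a i`, there exists `S` with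
subset-sum `t` iff the maximum of `F` over all subsets equals `V*t + V - t`. -/
theorem knapsack_reduction (m t : ℕ) (a : Fin m → ℕ) (ha : ∀ i, 0 < a i)
    (ht : 0 < t) (htV : t ≤ ∑ i, a i) :
    (∃ S : Finset (Fin m), ∑ i ∈ S, a i = t) ↔
      IsGreatest
        (Set.range (fun S : Finset (Fin m) =>
          min ((∑ i, a i) * t) ((∑ i, a i) * ∑ i ∈ S, a i) + ∑ i ∈ Sᶜ, a i))
        ((∑ i, a i) * t + (∑ i, a i) - t) := by
  set V := ∑ i, a i with hV
  have hcompl : ∀ T : Finset (Fin m), ∑ i ∈ Tᶜ, a i = V - ∑ i ∈ T, a i := by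
    intro T
    have h1 : ∑ i ∈ T, a i + ∑ i ∈ Tᶜ, a i = V := Finset.sum_add_sum_compl T a
    omega
  have hsub : ∀ T : Finset (Fin m), ∑ i ∈ T, a i ≤ V := by
    intro T
    exact Finset.sum_le_sum_of_subset (Finset.subset_univ T)
  constructor
  · rintro ⟨S, hS⟩
    constructor
    · refine ⟨S, ?_⟩
      simp only [hS, hcompl S, min_self]
      omega
    · rintro x ⟨T, rfl⟩
      simp only [hcompl T]
      set s := ∑ i ∈ T, a i with hs
      have hsV : s ≤ V := hsub T
      rcases le_total t s with hts | hst
      · rw [min_eq_left (Nat.mul_le_mul_left V hts)]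
        omega
      · rw [min_eq_right (Nat.mul_le_mul_left V hst)]
        have htle : t ≤ V * t + V := le_trans htV (Nat.le_add_left V (V*t))
        zify [hsV, htV, htle]
        have h1 : ((V:ℤ) - 1) * s ≤ ((V:ℤ) - 1) * t := by
          have hV1 : (1:ℤ) ≤ V := by exact_mod_cast ht.trans_le htV
          have : (0:ℤ) ≤ (V:ℤ) - 1 := by linarith
          exact mul_le_mul_of_nonneg_left (by exact_mod_cast hst) this
        nlinarith [h1]
  · rintro ⟨⟨S, hS⟩, -⟩
    simp only [hcompl S] at hS
    set s := ∑ i ∈ S, a i with hs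
    have hsV : s ≤ V := hsub S
    rcases le_total t s with hts | hst
    · rw [min_eq_left (Nat.mul_le_mul_left V hts)] at hS
      exact ⟨S, by omega⟩
    · rw [min_eq_right (Nat.mul_le_mul_left V hst)] at hS
      by_cases hseq : s = t
      · exact ⟨S, hseq⟩
      · have hslt : s < t := lt_of_le_of_ne hst hseq
        have htle : t ≤ V * t + V := le_trans htV (Nat.le_add_left V (V*t))
        zify [hsV, htV, htle] at hS
        have h2 : ((V:ℤ) - 1) * ((t:ℤ) - s) = 0 := by ring_nf; ring_nf at hS; linarith
        have hV1 : (1:ℤ) ≤ V := by exact_mod_cast ht.trans_le htV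
        rcases mul_eq_zero.mp h2 with h | h
        · have hVeq : V = 1 := by exact_mod_cast (by linarith : (V:ℤ) = 1)
          refine ⟨Finset.univ, ?_⟩
          show ∑ i ∈ Finset.univ, a i = t
          have : ∑ i ∈ Finset.univ, a i = V := rfl
          omega
        · exact absurd (by exact_mod_cast (by linarith : (s:ℤ) = t)) hseq
end

section
/- Let f, g, h : Π → ℝ be functions on a finite set Π, let π* maximize f over Π, and suppose π satisfies g(π) + h(π) ≥ α·(g(π') + h(π')) for all π' ∈ Π, for some α ∈ (0,1]. Suppose moreover that |f(π') − g(π')| ≤ b(π') for all π' ∈ Π, where b : Π → ℝ is nonnegative. Then α·f(π*) − f(π) ≤ h(π) − α·h(π*) + α·b(π*) + b(π). -/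
/-- abstract one-step regret decomposition with an
α-approximation oracle. -/
theorem approx_oracle_regret_decomposition {ι : Type*} [Fintype ι] [Nonempty ι]
    (f g h b : ι → ℝ) (hb : ∀ π', 0 ≤ b π')
    (α : ℝ) (hα0 : 0 < α) (hα1 : α ≤ 1)
    (πstar : ι) (hπstar : ∀ π', f π' ≤ f πstar)
    (π : ι) (hπ : ∀ π', α * (g π' + h π') ≤ g π + h π)
    (hfg : ∀ π', |f π' - g π'| ≤ b π') :
    α * f πstar - f π ≤ h π - α * h πstar + α * b πstar + b π := by
  have h1 := abs_le.mp (hfg πstar)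
  have h2 := abs_le.mp (hfg π)
  have h3 := hπ πstar
  nlinarith [h1.1, h1.2, h2.1, h2.2]
end
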